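/- arXiv:2110.05014 — 3 statements merged into one kernel-verified Lean document; each statement's English description precedes it below -/
import Mathlib

section
/- (Example, Section V-B, first privacy constraint) In the three-agent binary model with aggregation X̂ = X_1 ⊕ X_2 ⊕ X_3 ⊕ ξ, the conditional mutual information leaked about agent 3's feature satisfies I(X̂ ; X_3 | (X_1, X_2)) = −H_b(s) + H_b( s(1−r) + r(1−s) ). -/
open MeasureTheory Finset
open scoped ENNReal

/-- Conditional Shannon entropy (natural logarithm) of `A` given `C`,
with the convention `0 · log 0 = 0` (automatic from `Real.log 0 = 0` and `x / 0 = 0`). -/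
noncomputable def condEnt {Ω 𝒰 𝒱 : Type*} [MeasurableSpace Ω] [Fintype 𝒰] [Fintype 𝒱]
    (P : Measure Ω) (A : Ω → 𝒰) (C : Ω → 𝒱) : ℝ :=
  -∑ a : 𝒰, ∑ c : 𝒱,
    (P (A ⁻¹' {a} ∩ C ⁻¹' {c})).toReal *
      Real.log ((P (A ⁻¹' {a} ∩ C ⁻¹' {c})).toReal / (P (C ⁻¹' {c})).toReal)

/-- Conditional mutual information `I(A ; B | C) = H(A | C) − H(A | (B, C))`. -/
noncomputable def condMI {Ω 𝒰 ℬ 𝒱 : Type*} [MeasurableSpace Ω]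
    [Fintype 𝒰] [Fintype ℬ] [Fintype 𝒱]
    (P : Measure Ω) (A : Ω → 𝒰) (B : Ω → ℬ) (C : Ω → 𝒱) : ℝ :=
  condEnt P A C - condEnt P A (fun ω => (B ω, C ω))

/-- Binary entropy function (natural logarithm), `0 · log 0 = 0` by convention. -/
noncomputable def binEnt (t : ℝ) : ℝ :=
  -(t * Real.log t) - (1 - t) * Real.log (1 - t)

lemma hiff1 (x1 x2 x3 x4 a b c : Bool) :
    (xor (xor (xor x1 x2) x3) x4 = a ∧ (x1, x2) = (b, c)) ↔
      ((x1, x2, x3, x4) = (b, c, false, xor (xor (xor a b) c) false) ∨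
       (x1, x2, x3, x4) = (b, c, true, xor (xor (xor a b) c) true)) := by
  revert x1 x2 x3 x4 a b c; decide

lemma hiff2 (x1 x2 x3 x4 b c : Bool) :
    ((x1, x2) = (b, c)) ↔
      ((x1, x2, x3, x4) = (b, c, false, false) ∨ (x1, x2, x3, x4) = (b, c, false, true) ∨
       (x1, x2, x3, x4) = (b, c, true, false) ∨ (x1, x2, x3, x4) = (b, c, true, true)) := by
  revert x1 x2 x3 x4 b c; decide

lemma hiff3 (x1 x2 y3 x4 a x3 b c : Bool) :
    (xor (xor (xor x1 x2) y3) x4 = a ∧ (y3, (x1, x2)) = (x3, (b, c))) ↔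
      (x1, x2, y3, x4) = (b, c, x3, xor (xor (xor a b) c) x3) := by
  revert x1 x2 y3 x4 a x3 b c; decide

lemma hiff4 (x1 x2 y3 x4 x3 b c : Bool) :
    ((y3, (x1, x2)) = (x3, (b, c))) ↔
      ((x1, x2, y3, x4) = (b, c, x3, false) ∨ (x1, x2, y3, x4) = (b, c, x3, true)) := by
  revert x1 x2 y3 x4 x3 b c; decide

/-- (Example, Section V-B, first privacy constraint) In the three-agent binary model
with aggregation `X̂ = X₁ ⊕ X₂ ⊕ X₃ ⊕ ξ`, the conditional mutual information leaked about
agent 3's feature satisfies the stated closed form. -/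
theorem privacy_leakage_agent_three
    {Ω : Type*} [MeasurableSpace Ω] (P : Measure Ω) [IsProbabilityMeasure P]
    (r s : ℝ) (hr0 : 0 ≤ r) (hr1 : r ≤ 1) (hs0 : 0 ≤ s) (hs1 : s ≤ 1)
    (X1 X2 X3 ξ : Ω → Bool)
    (hX1 : Measurable X1) (hX2 : Measurable X2) (hX3 : Measurable X3) (hξ : Measurable ξ)
    (hjoint : ∀ a b c d : Bool,
      P (X1 ⁻¹' {a} ∩ X2 ⁻¹' {b} ∩ X3 ⁻¹' {c} ∩ ξ ⁻¹' {d}) =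
        ENNReal.ofReal ((1 / 2) * (if b = a then r else 1 - r) *
          (if c = b then r else 1 - r) * (if d = true then s else 1 - s))) :
    condMI P (fun ω => xor (xor (xor (X1 ω) (X2 ω)) (X3 ω)) (ξ ω)) X3 (fun ω => (X1 ω, X2 ω))
      = -binEnt s + binEnt (s * (1 - r) + r * (1 - s)) := by
  classical
  have hE0 : ∀ v : Bool × Bool × Bool × Bool, (0:ℝ) ≤
      (1 / 2) * (if v.2.1 = v.1 then r else 1 - r) *
        (if v.2.2.1 = v.2.1 then r else 1 - r) * (if v.2.2.2 = true then s else 1 - s) := by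
    intro v
    have h2 : (0:ℝ) ≤ 1/2 := by norm_num
    apply mul_nonneg (mul_nonneg (mul_nonneg h2 ?_) ?_) ?_ <;>
      split_ifs <;> linarith
  have hm : ∀ w : Bool × Bool × Bool × Bool,
      MeasurableSet ((fun ω => (X1 ω, X2 ω, X3 ω, ξ ω)) ⁻¹' {w}) :=
    fun w => (hX1.prodMk (hX2.prodMk (hX3.prodMk hξ))) (measurableSet_singleton w)
  have hd : ∀ w1 w2 : Bool × Bool × Bool × Bool, w1 ≠ w2 →
      Disjoint ((fun ω => (X1 ω, X2 ω, X3 ω, ξ ω)) ⁻¹' {w1})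
        ((fun ω => (X1 ω, X2 ω, X3 ω, ξ ω)) ⁻¹' {w2}) := by
    intro w1 w2 hne
    apply Set.disjoint_left.2
    intro ω h1 h2
    exact hne ((h1 : (X1 ω, X2 ω, X3 ω, ξ ω) = w1).symm.trans h2)
  have hA : ∀ w : Bool × Bool × Bool × Bool,
      P ((fun ω => (X1 ω, X2 ω, X3 ω, ξ ω)) ⁻¹' {w}) =
        ENNReal.ofReal ((1 / 2) * (if w.2.1 = w.1 then r else 1 - r) *
          (if w.2.2.1 = w.2.1 then r else 1 - r) * (if w.2.2.2 = true then s else 1 - s)) := by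
    intro w
    have hset : (fun ω => (X1 ω, X2 ω, X3 ω, ξ ω)) ⁻¹' {w} =
        X1 ⁻¹' {w.1} ∩ X2 ⁻¹' {w.2.1} ∩ X3 ⁻¹' {w.2.2.1} ∩ ξ ⁻¹' {w.2.2.2} := by
      ext ω
      simp [Prod.ext_iff, and_assoc]
    rw [hset, hjoint w.1 w.2.1 w.2.2.1 w.2.2.2]
  have hP2 : ∀ w1 w2 : Bool × Bool × Bool × Bool, w1 ≠ w2 →
      (P ((fun ω => (X1 ω, X2 ω, X3 ω, ξ ω)) ⁻¹' {w1} ∪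
          (fun ω => (X1 ω, X2 ω, X3 ω, ξ ω)) ⁻¹' {w2})).toReal =
        ((1 / 2) * (if w1.2.1 = w1.1 then r else 1 - r) *
          (if w1.2.2.1 = w1.2.1 then r else 1 - r) * (if w1.2.2.2 = true then s else 1 - s)) +
        ((1 / 2) * (if w2.2.1 = w2.1 then r else 1 - r) *
          (if w2.2.2.1 = w2.2.1 then r else 1 - r) * (if w2.2.2.2 = true then s else 1 - s)) := by
    intro w1 w2 hne
    rw [measure_union (hd w1 w2 hne) (hm w2), hA w1, hA w2,
      ← ENNReal.ofReal_add (hE0 w1) (hE0 w2),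
      ENNReal.toReal_ofReal (add_nonneg (hE0 w1) (hE0 w2))]
  have hP4 : ∀ w1 w2 w3 w4 : Bool × Bool × Bool × Bool,
      w1 ≠ w2 → w1 ≠ w3 → w1 ≠ w4 → w2 ≠ w3 → w2 ≠ w4 → w3 ≠ w4 →
      (P ((fun ω => (X1 ω, X2 ω, X3 ω, ξ ω)) ⁻¹' {w1} ∪
          (fun ω => (X1 ω, X2 ω, X3 ω, ξ ω)) ⁻¹' {w2} ∪
          (fun ω => (X1 ω, X2 ω, X3 ω, ξ ω)) ⁻¹' {w3} ∪
          (fun ω => (X1 ω, X2 ω, X3 ω, ξ ω)) ⁻¹' {w4})).toReal =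
        ((1 / 2) * (if w1.2.1 = w1.1 then r else 1 - r) *
          (if w1.2.2.1 = w1.2.1 then r else 1 - r) * (if w1.2.2.2 = true then s else 1 - s)) +
        ((1 / 2) * (if w2.2.1 = w2.1 then r else 1 - r) *
          (if w2.2.2.1 = w2.2.1 then r else 1 - r) * (if w2.2.2.2 = true then s else 1 - s)) +
        ((1 / 2) * (if w3.2.1 = w3.1 then r else 1 - r) *
          (if w3.2.2.1 = w3.2.1 then r else 1 - r) * (if w3.2.2.2 = true then s else 1 - s)) +
        ((1 / 2) * (if w4.2.1 = w4.1 then r else 1 - r) *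
          (if w4.2.2.1 = w4.2.1 then r else 1 - r) * (if w4.2.2.2 = true then s else 1 - s)) := by
    intro w1 w2 w3 w4 h12 h13 h14 h23 h24 h34
    rw [measure_union (Set.disjoint_union_left.2
        ⟨Set.disjoint_union_left.2 ⟨hd w1 w4 h14, hd w2 w4 h24⟩, hd w3 w4 h34⟩) (hm w4),
      measure_union (Set.disjoint_union_left.2 ⟨hd w1 w3 h13, hd w2 w3 h23⟩) (hm w3),
      measure_union (hd w1 w2 h12) (hm w2), hA w1, hA w2, hA w3, hA w4,
      ← ENNReal.ofReal_add (hE0 w1) (hE0 w2),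
      ← ENNReal.ofReal_add (add_nonneg (hE0 w1) (hE0 w2)) (hE0 w3),
      ← ENNReal.ofReal_add (add_nonneg (add_nonneg (hE0 w1) (hE0 w2)) (hE0 w3)) (hE0 w4),
      ENNReal.toReal_ofReal (add_nonneg (add_nonneg (add_nonneg (hE0 w1) (hE0 w2)) (hE0 w3))
        (hE0 w4))]
  have h1 : ∀ a b c : Bool,
      (P ((fun ω => xor (xor (xor (X1 ω) (X2 ω)) (X3 ω)) (ξ ω)) ⁻¹' {a} ∩
          (fun ω => (X1 ω, X2 ω)) ⁻¹' {(b, c)})).toReal =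
        1 / 2 * (if c = b then r else 1 - r) *
          (if a = b then s * (1 - r) + r * (1 - s) else 1 - (s * (1 - r) + r * (1 - s))) := by
    intro a b c
    have hset : (fun ω => xor (xor (xor (X1 ω) (X2 ω)) (X3 ω)) (ξ ω)) ⁻¹' {a} ∩
          (fun ω => (X1 ω, X2 ω)) ⁻¹' {(b, c)} =
        (fun ω => (X1 ω, X2 ω, X3 ω, ξ ω)) ⁻¹' {(b, c, false, xor (xor (xor a b) c) false)} ∪
        (fun ω => (X1 ω, X2 ω, X3 ω, ξ ω)) ⁻¹' {(b, c, true, xor (xor (xor a b) c) true)} := by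
      ext ω
      simp only [Set.mem_inter_iff, Set.mem_preimage, Set.mem_singleton_iff, Set.mem_union]
      exact hiff1 (X1 ω) (X2 ω) (X3 ω) (ξ ω) a b c
    rw [hset, hP2 _ _ (by simp)]
    cases a <;> cases b <;> cases c <;>
      · norm_num
        try ring
  have h2 : ∀ b c : Bool,
      (P ((fun ω => (X1 ω, X2 ω)) ⁻¹' {(b, c)})).toReal =
        1 / 2 * (if c = b then r else 1 - r) := by
    intro b c
    have hset : (fun ω => (X1 ω, X2 ω)) ⁻¹' {(b, c)} =
        (fun ω => (X1 ω, X2 ω, X3 ω, ξ ω)) ⁻¹' {(b, c, false, false)} ∪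
        (fun ω => (X1 ω, X2 ω, X3 ω, ξ ω)) ⁻¹' {(b, c, false, true)} ∪
        (fun ω => (X1 ω, X2 ω, X3 ω, ξ ω)) ⁻¹' {(b, c, true, false)} ∪
        (fun ω => (X1 ω, X2 ω, X3 ω, ξ ω)) ⁻¹' {(b, c, true, true)} := by
      ext ω
      simp only [Set.mem_preimage, Set.mem_singleton_iff, Set.mem_union, Set.union_assoc]
      exact hiff2 (X1 ω) (X2 ω) (X3 ω) (ξ ω) b c
    rw [hset, hP4 _ _ _ _ (by simp) (by simp) (by simp) (by simp) (by simp) (by simp)]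
    cases b <;> cases c <;>
      · norm_num
        try ring
  have h3 : ∀ a x3 b c : Bool,
      (P ((fun ω => xor (xor (xor (X1 ω) (X2 ω)) (X3 ω)) (ξ ω)) ⁻¹' {a} ∩
          (fun ω => (X3 ω, (X1 ω, X2 ω))) ⁻¹' {(x3, (b, c))})).toReal =
        1 / 2 * (if c = b then r else 1 - r) * (if x3 = c then r else 1 - r) *
          (if xor (xor (xor a b) c) x3 = true then s else 1 - s) := by
    intro a x3 b c
    have hset : (fun ω => xor (xor (xor (X1 ω) (X2 ω)) (X3 ω)) (ξ ω)) ⁻¹' {a} ∩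
          (fun ω => (X3 ω, (X1 ω, X2 ω))) ⁻¹' {(x3, (b, c))} =
        (fun ω => (X1 ω, X2 ω, X3 ω, ξ ω)) ⁻¹' {(b, c, x3, xor (xor (xor a b) c) x3)} := by
      ext ω
      simp only [Set.mem_inter_iff, Set.mem_preimage, Set.mem_singleton_iff]
      exact hiff3 (X1 ω) (X2 ω) (X3 ω) (ξ ω) a x3 b c
    rw [hset, hA, ENNReal.toReal_ofReal (hE0 _)]
  have h4 : ∀ x3 b c : Bool,
      (P ((fun ω => (X3 ω, (X1 ω, X2 ω))) ⁻¹' {(x3, (b, c))})).toReal =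
        1 / 2 * (if c = b then r else 1 - r) * (if x3 = c then r else 1 - r) := by
    intro x3 b c
    have hset : (fun ω => (X3 ω, (X1 ω, X2 ω))) ⁻¹' {(x3, (b, c))} =
        (fun ω => (X1 ω, X2 ω, X3 ω, ξ ω)) ⁻¹' {(b, c, x3, false)} ∪
        (fun ω => (X1 ω, X2 ω, X3 ω, ξ ω)) ⁻¹' {(b, c, x3, true)} := by
      ext ω
      simp only [Set.mem_preimage, Set.mem_singleton_iff, Set.mem_union]
      exact hiff4 (X1 ω) (X2 ω) (X3 ω) (ξ ω) x3 b c
    rw [hset, hP2 _ _ (by simp)]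
    norm_num
    split_ifs <;> ring
  have L : ∀ C t : ℝ, C * t * Real.log (C * t / C) = C * (t * Real.log t) := by
    intro C t
    rcases eq_or_ne C 0 with h | h
    · simp [h]
    · rw [mul_div_cancel_left₀ _ h]; ring
  simp only [condMI, condEnt, Fintype.sum_bool, Fintype.sum_prod_type]
  simp only [h1, h2, h3, h4]
  norm_num
  simp only [L]
  simp only [binEnt]
  ring
end

section
/- (Example, Section V-B, second privacy constraint) In the three-agent binary model with aggregation X̂ = X_1 ⊕ X_2 ⊕ X_3 ⊕ ξ, the conditional mutual information leaked about agent 1's feature satisfies I(X̂ ; X_1 | (X_2, X_3)) = −H_b(s) + H_b( s·r + (1−r)(1−s) ). -/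
open MeasureTheory Finset
open scoped ENNReal

lemma lg (x t : ℝ) : x * t * Real.log (x * t / x) = x * (t * Real.log t) := by
  rcases eq_or_ne x 0 with h | h
  · simp [h]
  · rw [mul_div_cancel_left₀ t h, mul_assoc]

lemma key_meas {Ω V : Type*} [MeasurableSpace Ω] [Fintype V] [DecidableEq V]
    (P : Measure Ω) (g : Ω → Bool × Bool × Bool × Bool) (hg : Measurable g)
    (q : Bool × Bool × Bool × Bool → ℝ) (hq : ∀ t, 0 ≤ q t)
    (hatom : ∀ t, P (g ⁻¹' {t}) = ENNReal.ofReal (q t))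
    (F : Bool × Bool × Bool × Bool → V) (v : V) :
    (P ((fun ω => F (g ω)) ⁻¹' {v})).toReal
      = ∑ t : Bool × Bool × Bool × Bool, if F t = v then q t else 0 := by
  have h1 : (fun ω => F (g ω)) ⁻¹' {v}
      = g ⁻¹' ↑(Finset.univ.filter fun t => F t = v) := by
    ext ω; simp
  rw [h1, ← MeasureTheory.sum_measure_preimage_singleton _
      (fun t _ => hg (measurableSet_singleton t))]
  simp only [hatom]
  rw [← ENNReal.ofReal_sum_of_nonneg (fun t _ => hq t),
    ENNReal.toReal_ofReal (Finset.sum_nonneg fun t _ => hq t), Finset.sum_filter]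

set_option maxHeartbeats 1000000 in
/-- (Example, Section V-B, second privacy constraint) In the three-agent binary model
with aggregation `X̂ = X₁ ⊕ X₂ ⊕ X₃ ⊕ ξ`, the conditional mutual information leaked about
agent 1's feature satisfies the stated closed form. -/
theorem privacy_leakage_agent_one
    {Ω : Type*} [MeasurableSpace Ω] (P : Measure Ω) [IsProbabilityMeasure P]
    (r s : ℝ) (hr0 : 0 ≤ r) (hr1 : r ≤ 1) (hs0 : 0 ≤ s) (hs1 : s ≤ 1)
    (X1 X2 X3 ξ : Ω → Bool)
    (hX1 : Measurable X1) (hX2 : Measurable X2) (hX3 : Measurable X3) (hξ : Measurable ξ)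
    (hjoint : ∀ a b c d : Bool,
      P (X1 ⁻¹' {a} ∩ X2 ⁻¹' {b} ∩ X3 ⁻¹' {c} ∩ ξ ⁻¹' {d}) =
        ENNReal.ofReal ((1 / 2) * (if b = a then r else 1 - r) *
          (if c = b then r else 1 - r) * (if d = true then s else 1 - s))) :
    condMI P (fun ω => xor (xor (xor (X1 ω) (X2 ω)) (X3 ω)) (ξ ω)) X1 (fun ω => (X2 ω, X3 ω))
      = -binEnt s + binEnt (s * r + (1 - r) * (1 - s)) := by
  have h2r : (0:ℝ) ≤ 1 - r := by linarith
  have h2s : (0:ℝ) ≤ 1 - s := by linarith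
  set g : Ω → Bool × Bool × Bool × Bool := fun ω => (X1 ω, X2 ω, X3 ω, ξ ω) with hg_def
  have hg : Measurable g := (hX1.prodMk (hX2.prodMk (hX3.prodMk hξ)))
  set q : Bool × Bool × Bool × Bool → ℝ := fun t =>
    1 / 2 * (if t.2.1 = t.1 then r else 1 - r) * (if t.2.2.1 = t.2.1 then r else 1 - r) *
      (if t.2.2.2 = true then s else 1 - s) with hq_def
  have hq : ∀ t, 0 ≤ q t := by
    intro t
    apply mul_nonneg (mul_nonneg (mul_nonneg (by norm_num) _) _) <;> split <;> assumption
  have hatom : ∀ t, P (g ⁻¹' {t}) = ENNReal.ofReal (q t) := by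
    rintro ⟨a, b, c, d⟩
    have hset : g ⁻¹' {(a, b, c, d)}
        = X1 ⁻¹' {a} ∩ X2 ⁻¹' {b} ∩ X3 ⁻¹' {c} ∩ ξ ⁻¹' {d} := by
      ext ω; simp [hg_def, Prod.ext_iff, and_assoc]
    rw [hset, hjoint]
  -- closed forms for all needed probabilities
  have hA : ∀ y b c : Bool,
      (P ((fun ω => xor (xor (xor (X1 ω) (X2 ω)) (X3 ω)) (ξ ω)) ⁻¹' {y}
          ∩ (fun ω => (X2 ω, X3 ω)) ⁻¹' {(b, c)})).toReal
        = 1 / 2 * (if c = b then r else 1 - r) *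
            (if xor y c then s * r + (1 - r) * (1 - s)
             else 1 - (s * r + (1 - r) * (1 - s))) := by
    intro y b c
    have hset : (fun ω => xor (xor (xor (X1 ω) (X2 ω)) (X3 ω)) (ξ ω)) ⁻¹' {y}
          ∩ (fun ω => (X2 ω, X3 ω)) ⁻¹' {(b, c)}
        = (fun ω => ((fun t : Bool × Bool × Bool × Bool =>
            (xor (xor (xor t.1 t.2.1) t.2.2.1) t.2.2.2, (t.2.1, t.2.2.1))) (g ω))) ⁻¹'
            {(y, (b, c))} := by
      ext ω; simp [hg_def, Prod.ext_iff, and_assoc]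
    rw [hset, key_meas P g hg q hq hatom (fun t : Bool × Bool × Bool × Bool =>
        (xor (xor (xor t.1 t.2.1) t.2.2.1) t.2.2.2, (t.2.1, t.2.2.1))) (y, (b, c))]
    rcases y <;> rcases b <;> rcases c <;>
      simp [hq_def, Fintype.sum_prod_type, Prod.ext_iff] <;> ring
  have hC : ∀ b c : Bool,
      (P ((fun ω => (X2 ω, X3 ω)) ⁻¹' {(b, c)})).toReal
        = 1 / 2 * (if c = b then r else 1 - r) := by
    intro b c
    have hset : (fun ω => (X2 ω, X3 ω)) ⁻¹' {(b, c)}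
        = (fun ω => ((fun t : Bool × Bool × Bool × Bool =>
            (t.2.1, t.2.2.1)) (g ω))) ⁻¹' {(b, c)} := by
      ext ω; simp [hg_def, Prod.ext_iff]
    rw [hset, key_meas P g hg q hq hatom (fun t : Bool × Bool × Bool × Bool =>
        (t.2.1, t.2.2.1)) (b, c)]
    rcases b <;> rcases c <;>
      simp [hq_def, Fintype.sum_prod_type, Prod.ext_iff] <;> ring
  have hB : ∀ y a b c : Bool,
      (P ((fun ω => xor (xor (xor (X1 ω) (X2 ω)) (X3 ω)) (ξ ω)) ⁻¹' {y}
          ∩ (fun ω => (X1 ω, (X2 ω, X3 ω))) ⁻¹' {(a, (b, c))})).toReal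
        = 1 / 2 * (if b = a then r else 1 - r) * (if c = b then r else 1 - r) *
            (if xor (xor (xor y a) b) c then s else 1 - s) := by
    intro y a b c
    have hset : (fun ω => xor (xor (xor (X1 ω) (X2 ω)) (X3 ω)) (ξ ω)) ⁻¹' {y}
          ∩ (fun ω => (X1 ω, (X2 ω, X3 ω))) ⁻¹' {(a, (b, c))}
        = (fun ω => ((fun t : Bool × Bool × Bool × Bool =>
            (xor (xor (xor t.1 t.2.1) t.2.2.1) t.2.2.2, (t.1, (t.2.1, t.2.2.1)))) (g ω))) ⁻¹'
            {(y, (a, (b, c)))} := by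
      ext ω; simp [hg_def, Prod.ext_iff, and_assoc]
    rw [hset, key_meas P g hg q hq hatom (fun t : Bool × Bool × Bool × Bool =>
        (xor (xor (xor t.1 t.2.1) t.2.2.1) t.2.2.2, (t.1, (t.2.1, t.2.2.1)))) (y, (a, (b, c)))]
    rcases y <;> rcases a <;> rcases b <;> rcases c <;>
      simp [hq_def, Fintype.sum_prod_type, Prod.ext_iff]
  have hD : ∀ a b c : Bool,
      (P ((fun ω => (X1 ω, (X2 ω, X3 ω))) ⁻¹' {(a, (b, c))})).toReal
        = 1 / 2 * (if b = a then r else 1 - r) * (if c = b then r else 1 - r) := by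
    intro a b c
    have hset : (fun ω => (X1 ω, (X2 ω, X3 ω))) ⁻¹' {(a, (b, c))}
        = (fun ω => ((fun t : Bool × Bool × Bool × Bool =>
            (t.1, (t.2.1, t.2.2.1))) (g ω))) ⁻¹' {(a, (b, c))} := by
      ext ω; simp [hg_def, Prod.ext_iff, and_assoc]
    rw [hset, key_meas P g hg q hq hatom (fun t : Bool × Bool × Bool × Bool =>
        (t.1, (t.2.1, t.2.2.1))) (a, (b, c))]
    rcases a <;> rcases b <;> rcases c <;>
      simp [hq_def, Fintype.sum_prod_type, Prod.ext_iff] <;> ring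
  simp only [condMI, condEnt, Fintype.sum_prod_type, Fintype.sum_bool]
  rw [hA, hA, hA, hA, hA, hA, hA, hA, hC, hC, hC, hC,
    hB, hB, hB, hB, hB, hB, hB, hB, hB, hB, hB, hB, hB, hB, hB, hB,
    hD, hD, hD, hD, hD, hD, hD, hD]
  norm_num [lg, binEnt]
  ring
end

section
/- (Example, Section V-B, third privacy constraint) In the three-agent binary model with aggregation X̂ = X_1 ⊕ X_2 ⊕ X_3 ⊕ ξ, the conditional mutual information leaked about agent 2's feature satisfies I(X̂ ; X_2 | (X_1, X_3)) = −H_b(s) + 2r(1−r)·log 2 + ((1−r)² + r²) · H_b( ((1−r)²·s + r²·(1−s)) / ((1−r)² + r²) ), provided (1−r)² + r² > 0. -/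
open MeasureTheory Finset
open scoped ENNReal

lemma key_measure {Ω : Type*} [MeasurableSpace Ω] (P : Measure Ω)
    (X1 X2 X3 ξ : Ω → Bool)
    (hX1 : Measurable X1) (hX2 : Measurable X2) (hX3 : Measurable X3) (hξ : Measurable ξ)
    (f : Bool × Bool × Bool × Bool → ℝ) (hf : ∀ t, 0 ≤ f t)
    (hj : ∀ t : Bool × Bool × Bool × Bool,
      P ((fun ω => (X1 ω, X2 ω, X3 ω, ξ ω)) ⁻¹' {t}) = ENNReal.ofReal (f t))
    (pred : Bool × Bool × Bool × Bool → Bool) :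
    (P {ω | pred (X1 ω, X2 ω, X3 ω, ξ ω) = true}).toReal
      = ∑ t : Bool × Bool × Bool × Bool, if pred t then f t else 0 := by
  set Y : Ω → Bool × Bool × Bool × Bool := fun ω => (X1 ω, X2 ω, X3 ω, ξ ω) with hY
  have hYm : Measurable Y := hX1.prodMk (hX2.prodMk (hX3.prodMk hξ))
  have hset : {ω | pred (Y ω) = true}
      = ⋃ t ∈ Finset.univ.filter (fun t => pred t = true), Y ⁻¹' {t} := by
    ext ω
    simp only [Set.mem_setOf_eq, Set.mem_iUnion, Finset.mem_filter, Finset.mem_univ,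
      true_and, Set.mem_preimage, Set.mem_singleton_iff]
    exact ⟨fun h => ⟨Y ω, h, rfl⟩, fun ⟨t, ht, he⟩ => he ▸ ht⟩
  have hmeas : P {ω | pred (Y ω) = true}
      = ∑ t ∈ Finset.univ.filter (fun t => pred t = true), P (Y ⁻¹' {t}) := by
    rw [hset]
    exact measure_biUnion_finset
      (fun t _ t' _ hne => (Set.disjoint_singleton.mpr hne).preimage Y)
      (fun t _ => hYm (measurableSet_singleton t))
  rw [hmeas]
  have : ∑ t ∈ Finset.univ.filter (fun t => pred t = true), P (Y ⁻¹' {t})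
      = ENNReal.ofReal (∑ t ∈ Finset.univ.filter (fun t => pred t = true), f t) := by
    rw [ENNReal.ofReal_sum_of_nonneg (fun t _ => hf t)]
    exact Finset.sum_congr rfl (fun t _ => hj t)
  rw [this, ENNReal.toReal_ofReal (Finset.sum_nonneg (fun t _ => hf t)),
    Finset.sum_filter]

lemma log_helper1 (x : ℝ) : x / 2 * Real.log (x / 2 / x) = -(x / 2 * Real.log 2) := by
  rcases eq_or_ne x 0 with h | h
  · simp [h]
  · have : x / 2 / x = 1 / 2 := by field_simp
    rw [this, one_div, Real.log_inv]
    ring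

lemma log_helper2 (x y : ℝ) : x * y * Real.log (x * y / x) = x * (y * Real.log y) := by
  rcases eq_or_ne x 0 with h | h
  · simp [h]
  · rw [show x * y / x = y by field_simp]
    ring

lemma half_div_half (x y : ℝ) : x / 2 / (y / 2) = x / y := by
  rw [div_div_div_comm]
  norm_num


set_option maxHeartbeats 1000000 in
/-- (Example, Section V-B, third privacy constraint) In the three-agent binary model
with aggregation `X̂ = X₁ ⊕ X₂ ⊕ X₃ ⊕ ξ`, the conditional mutual information leaked about
agent 2's feature satisfies the stated closed form. -/
theorem privacy_leakage_agent_two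
    {Ω : Type*} [MeasurableSpace Ω] (P : Measure Ω) [IsProbabilityMeasure P]
    (r s : ℝ) (hr0 : 0 ≤ r) (hr1 : r ≤ 1) (hs0 : 0 ≤ s) (hs1 : s ≤ 1)
    (X1 X2 X3 ξ : Ω → Bool)
    (hX1 : Measurable X1) (hX2 : Measurable X2) (hX3 : Measurable X3) (hξ : Measurable ξ)
    (hjoint : ∀ a b c d : Bool,
      P (X1 ⁻¹' {a} ∩ X2 ⁻¹' {b} ∩ X3 ⁻¹' {c} ∩ ξ ⁻¹' {d}) =
        ENNReal.ofReal ((1 / 2) * (if b = a then r else 1 - r) *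
          (if c = b then r else 1 - r) * (if d = true then s else 1 - s)))
    (hpos : 0 < (1 - r) ^ 2 + r ^ 2) :
    condMI P (fun ω => xor (xor (xor (X1 ω) (X2 ω)) (X3 ω)) (ξ ω)) X2 (fun ω => (X1 ω, X3 ω))
      = -binEnt s + 2 * r * (1 - r) * Real.log 2 +
        ((1 - r) ^ 2 + r ^ 2) *
          binEnt (((1 - r) ^ 2 * s + r ^ 2 * (1 - s)) / ((1 - r) ^ 2 + r ^ 2)) := by
  have hv0 : (0:ℝ) ≤ 1 - r := by linarith
  have hτ0 : (0:ℝ) ≤ 1 - s := by linarith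
  set f : Bool × Bool × Bool × Bool → ℝ := fun t =>
    (1 / 2) * (if t.2.1 = t.1 then r else 1 - r) *
      (if t.2.2.1 = t.2.1 then r else 1 - r) * (if t.2.2.2 = true then s else 1 - s) with hfdef
  have hf : ∀ t, 0 ≤ f t := by
    intro t
    have h1 : (0:ℝ) ≤ (if t.2.1 = t.1 then r else 1 - r) := by split <;> assumption
    have h2 : (0:ℝ) ≤ (if t.2.2.1 = t.2.1 then r else 1 - r) := by split <;> assumption
    have h3 : (0:ℝ) ≤ (if t.2.2.2 = true then s else 1 - s) := by split <;> assumption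
    positivity
  have hj : ∀ t : Bool × Bool × Bool × Bool,
      P ((fun ω => (X1 ω, X2 ω, X3 ω, ξ ω)) ⁻¹' {t}) = ENNReal.ofReal (f t) := by
    rintro ⟨a, b, c, d⟩
    have hseteq : (fun ω => (X1 ω, X2 ω, X3 ω, ξ ω)) ⁻¹' {(a, b, c, d)}
        = X1 ⁻¹' {a} ∩ X2 ⁻¹' {b} ∩ X3 ⁻¹' {c} ∩ ξ ⁻¹' {d} := by
      ext ω
      simp [Prod.ext_iff, and_assoc]
    rw [hseteq, hjoint]
  have key := key_measure P X1 X2 X3 ξ hX1 hX2 hX3 hξ f hf hj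
  have e1 : ∀ (a : Bool) (c : Bool × Bool),
      (P ((fun ω => xor (xor (xor (X1 ω) (X2 ω)) (X3 ω)) (ξ ω)) ⁻¹' {a}
          ∩ (fun ω => (X1 ω, X3 ω)) ⁻¹' {c})).toReal
      = if c.1 = c.2 then
          (if a = c.1 then ((1 - r) ^ 2 * s + r ^ 2 * (1 - s)) / 2
           else ((1 - r) ^ 2 * (1 - s) + r ^ 2 * s) / 2)
        else r * (1 - r) / 2 := by
    intro a c
    rw [show ((fun ω => xor (xor (xor (X1 ω) (X2 ω)) (X3 ω)) (ξ ω)) ⁻¹' {a}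
          ∩ (fun ω => (X1 ω, X3 ω)) ⁻¹' {c})
        = {ω | ((fun t : Bool × Bool × Bool × Bool =>
            (xor (xor (xor t.1 t.2.1) t.2.2.1) t.2.2.2 == a) && (t.1 == c.1) && (t.2.2.1 == c.2))
            (X1 ω, X2 ω, X3 ω, ξ ω)) = true} from by
      ext ω; simp [Prod.ext_iff, and_assoc],
      key (fun t : Bool × Bool × Bool × Bool =>
        (xor (xor (xor t.1 t.2.1) t.2.2.1) t.2.2.2 == a) && (t.1 == c.1) && (t.2.2.1 == c.2))]
    obtain ⟨c1, c3⟩ := c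
    rcases a <;> rcases c1 <;> rcases c3 <;>
      · simp [hfdef, Fintype.sum_prod_type, Fintype.sum_bool]
        ring
  have e2 : ∀ (c : Bool × Bool),
      (P ((fun ω => (X1 ω, X3 ω)) ⁻¹' {c})).toReal
      = if c.1 = c.2 then ((1 - r) ^ 2 + r ^ 2) / 2 else r * (1 - r) := by
    intro c
    rw [show ((fun ω => (X1 ω, X3 ω)) ⁻¹' {c})
        = {ω | ((fun t : Bool × Bool × Bool × Bool => (t.1 == c.1) && (t.2.2.1 == c.2))
            (X1 ω, X2 ω, X3 ω, ξ ω)) = true} from by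
      ext ω; simp [Prod.ext_iff],
      key (fun t : Bool × Bool × Bool × Bool => (t.1 == c.1) && (t.2.2.1 == c.2))]
    obtain ⟨c1, c3⟩ := c
    rcases c1 <;> rcases c3 <;>
      · simp [hfdef, Fintype.sum_prod_type, Fintype.sum_bool]
        ring
  have e3 : ∀ (a : Bool) (c : Bool × (Bool × Bool)),
      (P ((fun ω => xor (xor (xor (X1 ω) (X2 ω)) (X3 ω)) (ξ ω)) ⁻¹' {a}
          ∩ (fun ω => (X2 ω, X1 ω, X3 ω)) ⁻¹' {c})).toReal
      = (1 / 2 * (if c.1 = c.2.1 then r else 1 - r) * (if c.2.2 = c.1 then r else 1 - r))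
          * (if xor (xor (xor a c.2.1) c.1) c.2.2 = true then s else 1 - s) := by
    intro a c
    rw [show ((fun ω => xor (xor (xor (X1 ω) (X2 ω)) (X3 ω)) (ξ ω)) ⁻¹' {a}
          ∩ (fun ω => (X2 ω, X1 ω, X3 ω)) ⁻¹' {c})
        = {ω | ((fun t : Bool × Bool × Bool × Bool =>
            (xor (xor (xor t.1 t.2.1) t.2.2.1) t.2.2.2 == a) && (t.2.1 == c.1)
              && (t.1 == c.2.1) && (t.2.2.1 == c.2.2))
            (X1 ω, X2 ω, X3 ω, ξ ω)) = true} from by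
      ext ω; simp [Prod.ext_iff, and_assoc],
      key (fun t : Bool × Bool × Bool × Bool =>
        (xor (xor (xor t.1 t.2.1) t.2.2.1) t.2.2.2 == a) && (t.2.1 == c.1)
          && (t.1 == c.2.1) && (t.2.2.1 == c.2.2))]
    obtain ⟨b, c1, c3⟩ := c
    rcases a <;> rcases b <;> rcases c1 <;> rcases c3 <;>
      · simp [hfdef, Fintype.sum_prod_type, Fintype.sum_bool]
  have e4 : ∀ (c : Bool × (Bool × Bool)),
      (P ((fun ω => (X2 ω, X1 ω, X3 ω)) ⁻¹' {c})).toReal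
      = 1 / 2 * (if c.1 = c.2.1 then r else 1 - r) * (if c.2.2 = c.1 then r else 1 - r) := by
    intro c
    rw [show ((fun ω => (X2 ω, X1 ω, X3 ω)) ⁻¹' {c})
        = {ω | ((fun t : Bool × Bool × Bool × Bool =>
            (t.2.1 == c.1) && (t.1 == c.2.1) && (t.2.2.1 == c.2.2))
            (X1 ω, X2 ω, X3 ω, ξ ω)) = true} from by
      ext ω; simp [Prod.ext_iff, and_assoc],
      key (fun t : Bool × Bool × Bool × Bool =>
        (t.2.1 == c.1) && (t.1 == c.2.1) && (t.2.2.1 == c.2.2))]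
    obtain ⟨b, c1, c3⟩ := c
    rcases b <;> rcases c1 <;> rcases c3 <;>
      · simp [hfdef, Fintype.sum_prod_type, Fintype.sum_bool]
        ring
  rw [condMI, condEnt, condEnt]
  simp only [e1, e2, e3, e4]
  simp only [Fintype.sum_prod_type, Fintype.sum_bool]
  norm_num
  simp only [log_helper2, log_helper1, half_div_half]
  rw [binEnt, binEnt]
  have hD : ((1 - r) ^ 2 + r ^ 2) ≠ 0 := ne_of_gt hpos
  rw [show (1 - ((1 - r) ^ 2 * s + r ^ 2 * (1 - s)) / ((1 - r) ^ 2 + r ^ 2))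
      = ((1 - r) ^ 2 * (1 - s) + r ^ 2 * s) / ((1 - r) ^ 2 + r ^ 2) by field_simp; ring]
  rw [show ((1 - r) ^ 2 + r ^ 2) *
      (-(((1 - r) ^ 2 * s + r ^ 2 * (1 - s)) / ((1 - r) ^ 2 + r ^ 2) *
          Real.log (((1 - r) ^ 2 * s + r ^ 2 * (1 - s)) / ((1 - r) ^ 2 + r ^ 2))) -
        ((1 - r) ^ 2 * (1 - s) + r ^ 2 * s) / ((1 - r) ^ 2 + r ^ 2) *
          Real.log (((1 - r) ^ 2 * (1 - s) + r ^ 2 * s) / ((1 - r) ^ 2 + r ^ 2)))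
      = -(((1 - r) ^ 2 * s + r ^ 2 * (1 - s)) *
          Real.log (((1 - r) ^ 2 * s + r ^ 2 * (1 - s)) / ((1 - r) ^ 2 + r ^ 2))) -
        ((1 - r) ^ 2 * (1 - s) + r ^ 2 * s) *
          Real.log (((1 - r) ^ 2 * (1 - s) + r ^ 2 * s) / ((1 - r) ^ 2 + r ^ 2)) by
    field_simp]
  ring
end
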